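/- arXiv:1610.08599 — 2 statements merged into one kernel-verified Lean document; each statement's English description precedes it below -/
import Mathlib

section
/- Let V = {(a₁,a₂,a₃,a₄) ∈ ℂ⁴ : a₁ + a₂ = a₃ + a₄} and for i = 1,2,3,4 let φᵢ : V → ℂ be the restriction to V of the i-th coordinate functional, so that φ₁ + φ₂ = φ₃ + φ₄ on V. Then there do not exist positive linear functionals φ̃₁, φ̃₂, φ̃₃, φ̃₄ : ℂ⁴ → ℂ with φ̃ᵢ restricted to V equal to φᵢ for each i and φ̃₁ + φ̃₂ = φ̃₃ + φ̃₄. -/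
/-!
Evaluate `f 0 + f 1 = f 2 + f 3` at the unit vector `e₀`. The vectors `e₀ - e₁`, `e₀ + e₂` and
`e₀ + e₃` lie in `V`, so the extension property and monotonicity of positive functionals give
`f 0 e₀ ≥ f 0 (e₀ - e₁) = 1`, `f 3 e₀ ≤ f 3 (e₀ + e₂) = 0` and `f 2 e₀ ≤ f 2 (e₀ + e₃) = 0`,
while `f 1 e₀ ≥ 0`; hence `1 ≤ 0`.
-/

open ComplexOrder

noncomputable section

/-- A linear functional on `ℓ₄^∞ = ℂ⁴` is positive if it maps entrywise-nonnegative vectors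
to nonnegative reals (i.e. to complex numbers `≥ 0`). -/
def PosFun4 (f : (Fin 4 → ℂ) →ₗ[ℂ] ℂ) : Prop :=
  ∀ a : Fin 4 → ℂ, (∀ j, 0 ≤ a j) → 0 ≤ f a

theorem PosFun4.monotone {f : (Fin 4 → ℂ) →ₗ[ℂ] ℂ} (hf : PosFun4 f) : Monotone f :=
  (monotone_iff_map_nonneg f).2 hf

/-- Let `V = {a ∈ ℂ⁴ : a₀ + a₁ = a₂ + a₃}` and let `φᵢ` be the restriction
to `V` of the `i`-th coordinate functional, so `φ₀ + φ₁ = φ₂ + φ₃` on `V`.  There are no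
positive linear functionals `f i` on `ℂ⁴` extending the `φᵢ` with `f 0 + f 1 = f 2 + f 3`. -/
theorem no_positive_riesz_extension_namioka_phelps :
    ¬ ∃ f : Fin 4 → ((Fin 4 → ℂ) →ₗ[ℂ] ℂ),
      (∀ i, PosFun4 (f i)) ∧
      (∀ i, ∀ a : Fin 4 → ℂ, a 0 + a 1 = a 2 + a 3 → f i a = a i) ∧
      f 0 + f 1 = f 2 + f 3 := by
  rintro ⟨f, hpos, hext, hsum⟩
  let e : Fin 4 → Fin 4 → ℂ := fun j => Pi.single j 1
  have he : ∀ j, 0 ≤ e j := fun j => Pi.single_nonneg.2 zero_le_one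
  have h₀ : 1 ≤ f 0 (e 0) := calc
    (1 : ℂ) = f 0 (e 0 - e 1) := by rw [hext 0 _ (by simp [e])]; simp [e]
    _ ≤ f 0 (e 0) := (hpos 0).monotone (sub_le_self _ (he 1))
  have h₁ : 0 ≤ f 1 (e 0) := hpos 1 _ (he 0)
  have h₂ : f 2 (e 0) ≤ 0 := calc
    f 2 (e 0) ≤ f 2 (e 0 + e 3) := (hpos 2).monotone (le_add_of_nonneg_right (he 3))
    _ = 0 := by rw [hext 2 _ (by simp [e])]; simp [e]
  have h₃ : f 3 (e 0) ≤ 0 := calc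
    f 3 (e 0) ≤ f 3 (e 0 + e 2) := (hpos 3).monotone (le_add_of_nonneg_right (he 2))
    _ = 0 := by rw [hext 3 _ (by simp [e])]; simp [e]
  have hsum₀ : f 0 (e 0) + f 1 (e 0) = f 2 (e 0) + f 3 (e 0) := LinearMap.congr_fun hsum (e 0)
  refine (zero_lt_one' ℂ).not_ge ?_
  calc (1 : ℂ) ≤ f 0 (e 0) + f 1 (e 0) := le_add_of_le_of_nonneg h₀ h₁
    _ = f 2 (e 0) + f 3 (e 0) := hsum₀
    _ ≤ 0 := add_nonpos h₂ h₃
end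
end

section
/- Let V = {(a₁,a₂,a₃,a₄) ∈ ℂ⁴ : a₁ + a₂ = a₃ + a₄}. There is no unital positive linear map γ : ℂ⁴ → ℂ⁴ whose image is contained in V and whose restriction to V is the identity map of V; equivalently, there is no unital positive linear projection from ℓ₄^∞ onto V. -/
/-!
A positive linear map is monotone, so if it fixes `V` pointwise it sends `e₀` to a vector `u`
lying above every element of `V` below `e₀` and below every element of `V` above `e₀`.
Using `0, e₀ - e₁ ≤ e₀ ≤ e₀ + e₂, e₀ + e₃` this gives `u₀ + u₁ ≥ 1` and `u₂ + u₃ ≤ 0`,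
so `u ∉ V`, contradicting that the image lies in `V`.
-/

open ComplexOrder

def namiokaPhelps : Set (Fin 4 → ℂ) := {a | a 0 + a 1 = a 2 + a 3}

theorem map_single_zero_notMem_namiokaPhelps {γ : (Fin 4 → ℂ) → (Fin 4 → ℂ)}
    (hγ : Monotone γ) (hfix : ∀ a ∈ namiokaPhelps, γ a = a) :
    γ ![1, 0, 0, 0] ∉ namiokaPhelps := by
  set u := γ ![1, 0, 0, 0]
  have below : ∀ v ∈ namiokaPhelps, v ≤ ![1, 0, 0, 0] → v ≤ u :=
    fun v hv hle => hfix v hv ▸ hγ hle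
  have above : ∀ v ∈ namiokaPhelps, ![1, 0, 0, 0] ≤ v → u ≤ v :=
    fun v hv hle => hfix v hv ▸ hγ hle
  have h₀ : 1 ≤ u 0 := below ![1, -1, 0, 0] (by simp [namiokaPhelps])
    (fun i => by fin_cases i <;> simp) 0
  have h₁ : 0 ≤ u 1 := below 0 (by simp [namiokaPhelps]) (fun i => by fin_cases i <;> simp) 1
  have h₂ : u 2 ≤ 0 := above ![1, 0, 0, 1] (by simp [namiokaPhelps])
    (fun i => by fin_cases i <;> simp) 2
  have h₃ : u 3 ≤ 0 := above ![1, 0, 1, 0] (by simp [namiokaPhelps])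
    (fun i => by fin_cases i <;> simp) 3
  intro hu
  have : (1 : ℂ) ≤ 0 := calc
    1 ≤ u 0 + u 1 := by simpa using add_le_add h₀ h₁
    _ = u 2 + u 3 := hu
    _ ≤ 0 := add_nonpos h₂ h₃
  exact zero_lt_one.not_ge this

/-- Let `V = {a ∈ ℂ⁴ : a₀ + a₁ = a₂ + a₃}` (the Namioka–Phelps test
system inside `ℓ₄^∞ = ℂ⁴`).  There is no unital positive linear map `γ : ℂ⁴ → ℂ⁴` whose
image is contained in `V` and whose restriction to `V` is the identity, i.e. no unital
positive linear projection of `ℓ₄^∞` onto `V`. -/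
theorem no_positive_unital_projection_onto_namioka_phelps :
    ¬ ∃ γ : (Fin 4 → ℂ) →ₗ[ℂ] (Fin 4 → ℂ),
      (∀ a : Fin 4 → ℂ, (∀ i, 0 ≤ a i) → ∀ i, 0 ≤ γ a i) ∧
      γ (fun _ => 1) = (fun _ => 1) ∧
      (∀ a : Fin 4 → ℂ, γ a 0 + γ a 1 = γ a 2 + γ a 3) ∧
      (∀ a : Fin 4 → ℂ, a 0 + a 1 = a 2 + a 3 → γ a = a) := by
  rintro ⟨γ, hpos, -, hV, hfix⟩
  exact map_single_zero_notMem_namiokaPhelps ((monotone_iff_map_nonneg γ).2 hpos) hfix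
    (hV ![1, 0, 0, 0])
end
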